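/- There exists an infinite family $\mathcal{F}$ of right-angled triangles (2-dimensional closed triangular regions) in $\mathbb{R}^2$, each with positive area and uniformly bounded diameter, such that any two members intersect, yet no finite set of points pierces all members of $\mathcal{F}$. -/

import Mathlib

/-- A right-angled (closed, solid) triangle in the Euclidean plane. -/
def IsRightTriangle (F : Set (EuclideanSpace ℝ (Fin 2))) : Prop :=
  ∃ p q r : EuclideanSpace ℝ (Fin 2),
    ¬ Collinear ℝ ({p, q, r} : Set (EuclideanSpace ℝ (Fin 2))) ∧
    (inner ℝ (q - p) (r - p) : ℝ) = 0 ∧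
    F = convexHull ℝ ({p, q, r} : Set (EuclideanSpace ℝ (Fin 2)))

/-!
The triangles hug the tangent lines `y = 2ax - a²` of the parabola `y = x²`, for `a ∈ (0, 1]`.
The tangent lines at `a` and `b` meet at `((a + b)/2, ab)`, a point on the long leg of both
triangles, so any two members intersect. The triangle at `a` lies in the strip
`0 ≤ y - 2ax + a² ≤ a³ + 4a⁵`, and every fixed point leaves these strips as `a → 0⁺`; so any
finite set of points misses all triangles with `a` small enough.
-/

open Filter Set Topology

local notation "ℝ²" => EuclideanSpace ℝ (Fin 2)

theorem not_collinear_of_inner_eq_zero {V : Type*} [NormedAddCommGroup V]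
    [InnerProductSpace ℝ V] {p q r : V} (hq : q ≠ p) (hr : r ≠ p)
    (h : inner ℝ (q - p) (r - p) = 0) : ¬ Collinear ℝ ({p, q, r} : Set V) := by
  have hright : EuclideanGeometry.angle q p r = Real.pi / 2 :=
    (InnerProductGeometry.inner_eq_zero_iff_angle_eq_pi_div_two _ _).1 h
  rw [Set.insert_comm, EuclideanGeometry.collinear_iff_eq_or_eq_or_angle_eq_zero_or_angle_eq_pi,
    hright]
  have := Real.pi_pos
  rintro (h | h | h | h) <;> first | contradiction | exact hr h | linarith

theorem isRightTriangle_convexHull {p q r : ℝ²} (hq : q ≠ p) (hr : r ≠ p)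
    (h : inner ℝ (q - p) (r - p) = 0) : IsRightTriangle (convexHull ℝ {p, q, r}) :=
  ⟨p, q, r, not_collinear_of_inner_eq_zero hq hr h, h, rfl⟩

theorem Set.Finite.exists_finite_pierce {α : Type*} {𝓕 : Set (Set α)} (h𝓕 : 𝓕.Finite)
    (hne : ∀ F ∈ 𝓕, F.Nonempty) : ∃ P : Set α, P.Finite ∧ ∀ F ∈ 𝓕, ∃ p ∈ P, p ∈ F := by
  choose f hf using hne
  have := h𝓕.to_subtype
  exact ⟨range fun F : 𝓕 => f F F.2, finite_range _, fun F hF => ⟨_, ⟨⟨F, hF⟩, rfl⟩, hf F hF⟩⟩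

/-- The leg from the first to the second vertex lies on the tangent line `y = 2 a x - a²` of the
parabola `y = x²`; the third vertex sits at distance `a³ √(1 + 4a²)` from the first along the
normal. -/
noncomputable def tangentTriangle (a : ℝ) : Set ℝ² :=
  convexHull ℝ {!₂[0, -a ^ 2], !₂[1, 2 * a - a ^ 2], !₂[-2 * a ^ 4, a ^ 3 - a ^ 2]}

theorem isRightTriangle_tangentTriangle {a : ℝ} (ha : a ≠ 0) :
    IsRightTriangle (tangentTriangle a) := by
  refine isRightTriangle_convexHull ?_ ?_ ?_
  · intro h
    simpa using congrArg (· 0) h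
  · intro h
    have : a ^ 3 - a ^ 2 = -a ^ 2 := by simpa using congrArg (· 1) h
    exact pow_ne_zero 3 ha (by linarith)
  · simp only [PiLp.inner_apply, PiLp.sub_apply, RCLike.inner_apply, Real.ringHom_apply,
      Fin.sum_univ_two, Matrix.cons_val_zero, Matrix.cons_val_one, Matrix.cons_val_fin_one]
    ring

theorem tangentTriangle_subset_strip {a : ℝ} (ha : 0 ≤ a) :
    tangentTriangle a ⊆ {z | z 1 - 2 * a * z 0 + a ^ 2 ∈ Icc 0 (a ^ 3 + 4 * a ^ 5)} := by
  refine convexHull_min ?_ ?_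
  · have hc : (0 : ℝ) ≤ a ^ 3 + 4 * a ^ 5 := by positivity
    rintro z (rfl | rfl | rfl)
    · simpa using hc
    · simpa using hc
    · show _ ∈ Icc _ _
      convert right_mem_Icc.2 hc using 1
      simp only [Matrix.cons_val_zero, Matrix.cons_val_one, Matrix.cons_val_fin_one]
      ring
  · intro x hx y hy s t hs ht hst
    simp only [mem_ofPred_eq, PiLp.add_apply, PiLp.smul_apply, smul_eq_mul] at *
    convert (convex_Icc _ _) hx hy hs ht hst using 1
    simp only [smul_eq_mul]
    linear_combination (-a ^ 2) * hst

theorem tangent_intersection_mem_tangentTriangle {a b : ℝ} (ha : a ∈ Icc (0 : ℝ) 1)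
    (hb : b ∈ Icc (0 : ℝ) 1) :
    !₂[(a + b) / 2, a * b] ∈ tangentTriangle a := by
  have hseg : !₂[(a + b) / 2, a * b] ∈ segment ℝ !₂[0, -a ^ 2] !₂[1, 2 * a - a ^ 2] := by
    refine ⟨1 - (a + b) / 2, (a + b) / 2, by linarith [ha.2, hb.2], by linarith [ha.1, hb.1],
      by ring, ?_⟩
    ext i
    fin_cases i <;>
      simp only [Fin.zero_eta, Fin.mk_one, PiLp.add_apply, PiLp.smul_apply, smul_eq_mul,
        Matrix.cons_val_zero, Matrix.cons_val_one, Matrix.cons_val_fin_one] <;> ring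
  exact segment_subset_convexHull (by simp) (by simp) hseg

theorem diam_tangentTriangle_le {a : ℝ} (ha : a ∈ Icc (0 : ℝ) 1) :
    Metric.diam (tangentTriangle a) ≤ 6 := by
  rw [tangentTriangle, convexHull_diam]
  refine (Metric.diam_le_of_subset_closedBall (x := 0) (r := 3) (by norm_num) ?_).trans
    (by norm_num)
  have h2 : a ^ 2 ≤ 1 := pow_le_one₀ ha.1 ha.2
  have h4 : a ^ 4 ≤ 1 := pow_le_one₀ ha.1 ha.2
  rintro z (rfl | rfl | rfl) <;>
  · rw [mem_closedBall_zero_iff, ← sq_le_sq₀ (norm_nonneg _) (by norm_num : (0 : ℝ) ≤ 3),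
      EuclideanSpace.norm_sq_eq]
    simp only [Fin.sum_univ_two, Real.norm_eq_abs, sq_abs, Matrix.cons_val_zero,
      Matrix.cons_val_one, Matrix.cons_val_fin_one]
    nlinarith [pow_nonneg ha.1 2, pow_nonneg ha.1 3, pow_nonneg ha.1 4]

theorem eventually_tangentGap_notMem_Icc (x y : ℝ) :
    ∀ᶠ a in 𝓝[>] 0, y - 2 * a * x + a ^ 2 ∉ Icc 0 (a ^ 3 + 4 * a ^ 5) := by
  rcases lt_trichotomy y 0 with hy | rfl | hy
  · have : ∀ᶠ a in 𝓝 (0 : ℝ), y - 2 * a * x + a ^ 2 < 0 :=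
      (show ContinuousAt (fun a : ℝ => y - 2 * a * x + a ^ 2) 0 by fun_prop).eventually_lt
        continuousAt_const (by simpa using hy)
    filter_upwards [nhdsWithin_le_nhds this] with a ha using fun h => h.1.not_gt ha
  · rcases lt_or_ge 0 x with hx | hx
    · filter_upwards [self_mem_nhdsWithin,
        nhdsWithin_le_nhds (eventually_lt_nhds (by linarith : 0 < 2 * x))] with a (ha : 0 < a) hax h
      nlinarith [h.1]
    · have : ∀ᶠ a in 𝓝 (0 : ℝ), a + 4 * a ^ 3 < 1 :=
        (show ContinuousAt (fun a : ℝ => a + 4 * a ^ 3) 0 by fun_prop).eventually_lt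
          continuousAt_const (by norm_num)
      filter_upwards [self_mem_nhdsWithin, nhdsWithin_le_nhds this] with a (ha : 0 < a) ha1 h
      nlinarith [h.2, mul_lt_mul_of_pos_left ha1 (pow_pos ha 2)]
  · have : ∀ᶠ a in 𝓝 (0 : ℝ), a ^ 3 + 4 * a ^ 5 < y - 2 * a * x + a ^ 2 :=
      (show ContinuousAt (fun a : ℝ => a ^ 3 + 4 * a ^ 5) 0 by fun_prop).eventually_lt
        (by fun_prop) (by simpa using hy)
    filter_upwards [nhdsWithin_le_nhds this] with a ha using fun h => h.2.not_gt ha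

theorem eventually_notMem_tangentTriangle (z : ℝ²) :
    ∀ᶠ a in 𝓝[>] 0, z ∉ tangentTriangle a := by
  filter_upwards [self_mem_nhdsWithin, eventually_tangentGap_notMem_Icc (z 0) (z 1)]
    with a (ha : 0 < a) hgap hz
  exact hgap (tangentTriangle_subset_strip ha.le hz)

theorem not_exists_finite_pierce_tangentTriangle :
    ¬ ∃ P : Set ℝ², P.Finite ∧ ∀ F ∈ tangentTriangle '' Ioc 0 1, ∃ p ∈ P, p ∈ F := by
  rintro ⟨P, hP, hpierce⟩
  have hmiss : ∀ᶠ a in 𝓝[>] 0, ∀ p ∈ P, p ∉ tangentTriangle a :=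
    (eventually_all_finite hP).2 fun p _ => eventually_notMem_tangentTriangle p
  obtain ⟨a, ha, hmiss⟩ := (Filter.Eventually.and (Ioc_mem_nhdsGT one_pos) hmiss).exists
  obtain ⟨p, hp, hpa⟩ := hpierce _ (mem_image_of_mem _ ha)
  exact hmiss p hp hpa

theorem stmt11 :
    ∃ 𝓕 : Set (Set (EuclideanSpace ℝ (Fin 2))),
      𝓕.Infinite ∧
      (∀ F ∈ 𝓕, IsRightTriangle F) ∧
      (∃ D : ℝ, ∀ F ∈ 𝓕, Metric.diam F ≤ D) ∧
      (∀ F ∈ 𝓕, ∀ G ∈ 𝓕, (F ∩ G).Nonempty) ∧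
      ¬ ∃ P : Set (EuclideanSpace ℝ (Fin 2)), P.Finite ∧ ∀ F ∈ 𝓕, ∃ p ∈ P, p ∈ F := by
  refine ⟨tangentTriangle '' Ioc 0 1, fun hfin => ?_, ?_, ⟨6, ?_⟩, ?_,
    not_exists_finite_pierce_tangentTriangle⟩
  · refine not_exists_finite_pierce_tangentTriangle (hfin.exists_finite_pierce ?_)
    rintro _ ⟨a, -, rfl⟩
    exact ⟨_, subset_convexHull ℝ _ (mem_insert _ _)⟩
  · rintro _ ⟨a, ha, rfl⟩
    exact isRightTriangle_tangentTriangle ha.1.ne'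
  · rintro _ ⟨a, ha, rfl⟩
    exact diam_tangentTriangle_le (Ioc_subset_Icc_self ha)
  · rintro _ ⟨a, ha, rfl⟩ _ ⟨b, hb, rfl⟩
    replace ha := Ioc_subset_Icc_self ha
    replace hb := Ioc_subset_Icc_self hb
    refine ⟨_, tangent_intersection_mem_tangentTriangle ha hb, ?_⟩
    rw [add_comm, mul_comm]
    exact tangent_intersection_mem_tangentTriangle hb ha
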